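/- arXiv:1308.2029 — 3 statements merged into one kernel-verified Lean document; each statement's English description precedes it below -/
import Mathlib

section
/- Let 0 < α < 1 and let σ_1,…,σ_d be positive reals. Then ∑_{i=1}^d [ln(σ_i+1) − ln(α σ_i + 1)] < ∑_{i=1}^d [ln(σ_i + 1 − α) − ln(α σ_i + 1 − α)], and both sums are strictly less than d ln(1/α). Hence the asymptotic ordering D_3 < D_2 < D_1 of the error coefficients holds. -/
theorem stmt_4 (α : ℝ) (hα0 : 0 < α) (hα1 : α < 1) (d : ℕ) (hd : 0 < d)
    (σ : Fin d → ℝ) (hσ : ∀ i, 0 < σ i) :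
    (∑ i, (Real.log (σ i + 1) - Real.log (α * σ i + 1))) <
      (∑ i, (Real.log (σ i + 1 - α) - Real.log (α * σ i + 1 - α))) ∧
    (∑ i, (Real.log (σ i + 1) - Real.log (α * σ i + 1))) < d * Real.log (1 / α) ∧
    (∑ i, (Real.log (σ i + 1 - α) - Real.log (α * σ i + 1 - α))) < d * Real.log (1 / α) := by
  have h1α : 0 < 1 - α := by linarith
  have hne : (Finset.univ : Finset (Fin d)).Nonempty := by
    simpa [Finset.univ_nonempty_iff] using Fin.pos_iff_nonempty.mp hd
  have key1 : ∀ i, Real.log (σ i + 1) - Real.log (α * σ i + 1) <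
      Real.log (σ i + 1 - α) - Real.log (α * σ i + 1 - α) := by
    intro i
    have hs := hσ i
    have p1 : (0:ℝ) < σ i + 1 := by linarith
    have p2 : (0:ℝ) < α * σ i + 1 := by nlinarith
    have p3 : (0:ℝ) < σ i + 1 - α := by linarith
    have p4 : (0:ℝ) < α * σ i + 1 - α := by nlinarith
    rw [← Real.log_div p1.ne' p2.ne', ← Real.log_div p3.ne' p4.ne']
    apply Real.log_lt_log (by positivity)
    rw [div_lt_div_iff₀ p2 p4]
    nlinarith [mul_pos hα0 hs, mul_pos (mul_pos hα0 hs) h1α]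
  have key2 : ∀ i, Real.log (σ i + 1 - α) - Real.log (α * σ i + 1 - α) <
      Real.log (1 / α) := by
    intro i
    have hs := hσ i
    have p3 : (0:ℝ) < σ i + 1 - α := by linarith
    have p4 : (0:ℝ) < α * σ i + 1 - α := by nlinarith
    rw [← Real.log_div p3.ne' p4.ne']
    apply Real.log_lt_log (by positivity)
    rw [div_lt_div_iff₀ p4 hα0, one_mul]
    nlinarith [sq_nonneg (1 - α)]
  have hsum1 : (∑ i, (Real.log (σ i + 1) - Real.log (α * σ i + 1))) <
      (∑ i, (Real.log (σ i + 1 - α) - Real.log (α * σ i + 1 - α))) :=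
    Finset.sum_lt_sum_of_nonempty hne fun i _ => key1 i
  have hsum2 : (∑ i, (Real.log (σ i + 1 - α) - Real.log (α * σ i + 1 - α))) <
      d * Real.log (1 / α) := by
    calc _ < ∑ _i : Fin d, Real.log (1 / α) :=
          Finset.sum_lt_sum_of_nonempty hne fun i _ => key2 i
      _ = d * Real.log (1 / α) := by simp [Finset.sum_const, mul_comm]
  exact ⟨hsum1, hsum1.trans hsum2, hsum2⟩
end

section
/- Let A, B be symmetric positive definite real d×d matrices with A − B positive semidefinite, and let 0 < α < 1. Then ln det((α·1 + (1−α)·A·B^{-1})) + ln det(α·1 + (1−α)·B·A^{-1}) ≥ 0, i.e., det(αB + (1−α)A) · det(αA + (1−α)B) ≥ det(A) · det(B). -/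
/-!
Conjugating by `√B` reduces the claim to `C = B^{-1/2} A B^{-1/2} ⪰ 0`, where both determinants
factor over the eigenvalues `μ` of `C`. The inequality then holds factor by factor:
`(a + bμ)(b + aμ) = μ + ab(μ - 1)² ≥ μ` whenever `a, b ≥ 0` and `a + b = 1`.
Since `α + (1 - α) A B⁻¹ = (α B + (1 - α) A) B⁻¹`, the logarithmic form is the same inequality
divided by `det A · det B`.
-/

open Matrix

lemma self_le_add_mul_mul_add_mul {a b μ : ℝ} (ha : 0 ≤ a) (hb : 0 ≤ b) (hab : a + b = 1) :
    μ ≤ (a + b * μ) * (b + a * μ) := by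
  have hsplit : (a + b * μ) * (b + a * μ) = μ * (a + b) ^ 2 + a * b * (μ - 1) ^ 2 := by ring
  rw [hsplit, hab]
  nlinarith [mul_nonneg (mul_nonneg ha hb) (sq_nonneg (μ - 1))]

namespace Matrix

variable {n : Type*} [Fintype n] [DecidableEq n]

lemma IsHermitian.det_cfc {A : Matrix n n ℝ} (hA : A.IsHermitian) (f : ℝ → ℝ) :
    (cfc f A).det = ∏ i, f (hA.eigenvalues i) := by
  simp [hA.cfc_eq, IsHermitian.cfc, -Unitary.conjStarAlgAut_apply]

lemma IsHermitian.det_smul_one_add_smul {A : Matrix n n ℝ} (hA : A.IsHermitian) (a b : ℝ) :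
    (a • 1 + b • A).det = ∏ i, (a + b * hA.eigenvalues i) := by
  have hcfc : a • 1 + b • A = cfc (fun x => a + b * x) A := by
    rw [cfc_add .., cfc_const_mul .., cfc_const .., cfc_id' .., Algebra.algebraMap_eq_smul_one]
  rw [hcfc, hA.det_cfc]

lemma PosSemidef.det_le_det_mul_det {C : Matrix n n ℝ} (hC : C.PosSemidef) {a b : ℝ}
    (ha : 0 ≤ a) (hb : 0 ≤ b) (hab : a + b = 1) :
    C.det ≤ (a • 1 + b • C).det * (b • 1 + a • C).det := by
  rw [hC.isHermitian.det_eq_prod_eigenvalues, hC.isHermitian.det_smul_one_add_smul,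
    hC.isHermitian.det_smul_one_add_smul, ← Finset.prod_mul_distrib]
  exact Finset.prod_le_prod (fun i _ => hC.eigenvalues_nonneg i)
    (fun i _ => self_le_add_mul_mul_add_mul ha hb hab)

open scoped MatrixOrder in
lemma PosSemidef.det_mul_det_le {A B : Matrix n n ℝ} (hA : A.PosSemidef) (hB : B.PosDef)
    {a b : ℝ} (ha : 0 ≤ a) (hb : 0 ≤ b) (hab : a + b = 1) :
    A.det * B.det ≤ (a • B + b • A).det * (b • B + a • A).det := by
  set S := CFC.sqrt B
  have hSsymm : Sᵀ = S := (CFC.sqrt_nonneg B).posSemidef.isHermitian.eq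
  have hSdet : IsUnit S.det := (isUnit_iff_isUnit_det S).mp
    ((CFC.isUnit_sqrt_iff B hB.posSemidef.nonneg).mpr hB.isUnit)
  have hSS : S * S = B := CFC.sqrt_mul_sqrt_self B hB.posSemidef.nonneg
  set C := S⁻¹ * A * S⁻¹
  have hC : C.PosSemidef := by
    simpa [transpose_nonsing_inv, hSsymm] using hA.mul_mul_conjTranspose_same S⁻¹
  have hSCS : S * C * S = A := by
    simp [C, mul_assoc, mul_nonsing_inv_cancel_left _ _ hSdet, nonsing_inv_mul _ hSdet]
  have hcongr : ∀ x y : ℝ, (x • B + y • A).det = B.det * (x • 1 + y • C).det := by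
    intro x y
    have hfactor : x • B + y • A = S * (x • 1 + y • C) * S := by
      rw [← hSS, ← hSCS]; noncomm_ring
    rw [hfactor, ← hSS, det_mul, det_mul, det_mul]
    ring
  have hdetA : A.det = B.det * C.det :=
    calc A.det = (S * C * S).det := by rw [hSCS]
      _ = (S * S).det * C.det := by simp only [det_mul]; ring
      _ = B.det * C.det := by rw [hSS]
  rw [hcongr, hcongr, hdetA]
  have hBdet := hB.det_pos
  nlinarith [mul_le_mul_of_nonneg_left (hC.det_le_det_mul_det ha hb hab) (mul_pos hBdet hBdet).le]

lemma smul_one_add_smul_mul_inv (A : Matrix n n ℝ) {B : Matrix n n ℝ} (hB : IsUnit B.det)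
    (a b : ℝ) : a • 1 + b • (A * B⁻¹) = (a • B + b • A) * B⁻¹ := by
  rw [Matrix.add_mul, smul_mul_assoc, smul_mul_assoc, mul_nonsing_inv _ hB]

end Matrix

theorem stmt_10_general (d : ℕ) (α : ℝ) (hα0 : 0 < α) (hα1 : α < 1)
    (A B : Matrix (Fin d) (Fin d) ℝ) (hA : A.PosDef) (hB : B.PosDef) :
    0 ≤ Real.log (α • (1 : Matrix (Fin d) (Fin d) ℝ) + (1 - α) • (A * B⁻¹)).det +
        Real.log (α • (1 : Matrix (Fin d) (Fin d) ℝ) + (1 - α) • (B * A⁻¹)).det ∧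
    A.det * B.det ≤ (α • B + (1 - α) • A).det * (α • A + (1 - α) • B).det := by
  have hprod :
      A.det * B.det ≤ (α • B + (1 - α) • A).det * (α • A + (1 - α) • B).det := by
    simpa only [add_comm ((1 - α) • B)] using
      hA.posSemidef.det_mul_det_le hB hα0.le (sub_nonneg.mpr hα1.le) (add_sub_cancel α 1)
  refine ⟨?_, hprod⟩
  have hAdet := hA.det_pos
  have hBdet := hB.det_pos
  have hpos : 0 < (α • B + (1 - α) • A).det * (α • A + (1 - α) • B).det :=
    (mul_pos hAdet hBdet).trans_le hprod
  have hP₁ : (α • B + (1 - α) • A).det ≠ 0 := left_ne_zero_of_mul hpos.ne'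
  have hP₂ : (α • A + (1 - α) • B).det ≠ 0 := right_ne_zero_of_mul hpos.ne'
  rw [smul_one_add_smul_mul_inv A hBdet.ne'.isUnit, smul_one_add_smul_mul_inv B hAdet.ne'.isUnit,
    det_mul, det_mul, det_nonsing_inv, det_nonsing_inv, Ring.inverse_eq_inv, Ring.inverse_eq_inv,
    ← Real.log_mul (mul_ne_zero hP₁ (inv_ne_zero hBdet.ne'))
      (mul_ne_zero hP₂ (inv_ne_zero hAdet.ne'))]
  apply Real.log_nonneg
  calc 1 ≤ (α • B + (1 - α) • A).det * (α • A + (1 - α) • B).det / (A.det * B.det) :=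
        (one_le_div (mul_pos hAdet hBdet)).mpr hprod
    _ = _ := by field_simp

theorem stmt_10 (d : ℕ) (α : ℝ) (hα0 : 0 < α) (hα1 : α < 1)
    (A B : Matrix (Fin d) (Fin d) ℝ) (hA : A.PosDef) (hB : B.PosDef)
    (hAB : (A - B).PosSemidef) :
    0 ≤ Real.log (α • (1 : Matrix (Fin d) (Fin d) ℝ) + (1 - α) • (A * B⁻¹)).det +
        Real.log (α • (1 : Matrix (Fin d) (Fin d) ℝ) + (1 - α) • (B * A⁻¹)).det ∧
    A.det * B.det ≤ (α • B + (1 - α) • A).det * (α • A + (1 - α) • B).det :=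
  stmt_10_general d α hα0 hα1 A B hA hB
end

section
/- Let 0 < α < 1 and let λ_1,…,λ_d be reals ≥ 1. Define D_NL-coefficient S_4 = ∑_i ln(α + (1−α)λ_i) and D_3-coefficient S_3 = −∑_i ln(α + (1−α)/λ_i). Then S_4 − S_3 = ∑_i ln(α(1−α)(λ_i + 1/λ_i) + α² + (1−α)²), and each summand is a nonnegative, strictly increasing function of λ_i on [1, ∞). -/
theorem stmt_16 (α : ℝ) (hα0 : 0 < α) (hα1 : α < 1) (d : ℕ)
    (lam : Fin d → ℝ) (hlam : ∀ i, 1 ≤ lam i) :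
    (∑ i, Real.log (α + (1 - α) * lam i)) -
        (-(∑ i, Real.log (α + (1 - α) / lam i))) =
      (∑ i, Real.log (α * (1 - α) * (lam i + 1 / lam i) + α ^ 2 + (1 - α) ^ 2)) ∧
    (∀ l : ℝ, 1 ≤ l →
      0 ≤ Real.log (α * (1 - α) * (l + 1 / l) + α ^ 2 + (1 - α) ^ 2)) ∧
    StrictMonoOn
      (fun l : ℝ => Real.log (α * (1 - α) * (l + 1 / l) + α ^ 2 + (1 - α) ^ 2))
      (Set.Ici 1) := by
  have hc : 0 < α * (1 - α) := mul_pos hα0 (by linarith)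
  have harg : ∀ l : ℝ, 1 ≤ l →
      1 ≤ α * (1 - α) * (l + 1 / l) + α ^ 2 + (1 - α) ^ 2 := by
    intro l hl
    have hl0 : 0 < l := by linarith
    have key : l + 1 / l - 2 = (l - 1) ^ 2 / l := by field_simp; ring
    have h2 : (2:ℝ) ≤ l + 1 / l := by nlinarith [div_nonneg (sq_nonneg (l-1)) hl0.le]
    nlinarith
  refine ⟨?_, ?_, ?_⟩
  · rw [sub_neg_eq_add, ← Finset.sum_add_distrib]
    apply Finset.sum_congr rfl
    intro i _
    have hli := hlam i
    have hl0 : 0 < lam i := by linarith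
    have h1 : 0 < α + (1 - α) * lam i := by nlinarith
    have h2 : 0 < α + (1 - α) / lam i := by
      have := div_pos (by linarith : (0:ℝ) < 1 - α) hl0
      linarith
    rw [← Real.log_mul (ne_of_gt h1) (ne_of_gt h2)]
    congr 1
    field_simp
    ring
  · intro l hl
    exact Real.log_nonneg (harg l hl)
  · intro a ha b hb hab
    simp only [Set.mem_Ici] at ha hb
    have ha0 : 0 < a := by linarith
    have hb0 : 0 < b := by linarith
    have hsum : a + 1 / a < b + 1 / b := by
      have key : (b + 1 / b) - (a + 1 / a) = (b - a) * (a * b - 1) / (a * b) := by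
        field_simp; ring
      have hpos : 0 < (b - a) * (a * b - 1) / (a * b) := by
        apply div_pos _ (by positivity)
        apply mul_pos (by linarith)
        nlinarith
      linarith
    apply Real.log_lt_log
    · linarith [harg a ha]
    · nlinarith
end
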